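/- Let 1 ≤ i ≤ n−2 and let v be any element of the subgroup of D_n generated by s_{i+1}, s_{i+2}, …, s_n. Then for every ordered list L of distinct elements of ±[n] and every w ∈ D_n, v·( h_{i, L}(w) ) = h_{i, v(L)}( v·w ), where · is the ordinary product; i.e., left multiplication by v intertwines h_{i,L} with h_{i,v(L)}. -/

import Mathlib

open Equiv

/-- The key of `a : ℤ` in the total order `1 < 2 < ⋯ < n < -n < ⋯ < -2 < -1` on `±[n]`:
elements of `±[n]` get the keys `1, …, 2n` (in order); anything else gets key `2n+1`. -/
def dkey (n : ℕ) (a : ℤ) : ℤ :=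
  if 1 ≤ a ∧ a ≤ (n : ℤ) then a
  else if -(n : ℤ) ≤ a ∧ a ≤ -1 then 2 * n + 1 + a
  else 2 * n + 1

/-- `a < b` in the total order `1 < 2 < ⋯ < n < -n < ⋯ < -2 < -1` on `±[n]`. -/
def dlt (n : ℕ) (a b : ℤ) : Prop := dkey n a < dkey n b

instance (n : ℕ) (a b : ℤ) : Decidable (dlt n a b) :=
  inferInstanceAs (Decidable (dkey n a < dkey n b))

/-- `a` is an element of `±[n] = {1,…,n} ∪ {-1,…,-n}`. -/
def inPM (n : ℕ) (a : ℤ) : Prop := a ≠ 0 ∧ |a| ≤ (n : ℤ)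

instance (n : ℕ) (a : ℤ) : Decidable (inPM n a) :=
  inferInstanceAs (Decidable (a ≠ 0 ∧ |a| ≤ (n : ℤ)))

/-- The element of `±[n]` whose key is `k` (for `1 ≤ k ≤ 2n`). -/
def ofKey (n : ℕ) (k : ℤ) : ℤ := if k ≤ (n : ℤ) then k else k - (2 * n + 1)

/-- A signed permutation of `±[n]`, viewed as a permutation of `ℤ`:
it commutes with negation and fixes everything outside `±[n]`. -/
def IsSignedPerm (n : ℕ) (w : Perm ℤ) : Prop :=
  (∀ a : ℤ, w (-a) = -(w a)) ∧ ∀ a : ℤ, (n : ℤ) < |a| → w a = a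

/-- An even signed permutation of `±[n]`, i.e. an element of the group `D_n`. -/
def IsEvenSignedPerm (n : ℕ) (w : Perm ℤ) : Prop :=
  IsSignedPerm n w ∧ Even ((Finset.Icc (1 : ℤ) (n : ℤ)).filter fun i => w i < 0).card

/-- The simple generators `s_1, …, s_n` of `D_n`:  for `1 ≤ i ≤ n-1`, `s_i` exchanges the
values `i ↔ i+1` and `-i ↔ -(i+1)`;  `s_n` exchanges the values `n-1 ↔ -n` and `n ↔ -(n-1)`. -/
def sgen (n i : ℕ) : Perm ℤ :=
  if i = n then Equiv.swap ((n : ℤ) - 1) (-(n : ℤ)) * Equiv.swap (n : ℤ) (-((n : ℤ) - 1))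
  else Equiv.swap (i : ℤ) ((i : ℤ) + 1) * Equiv.swap (-(i : ℤ)) (-((i : ℤ) + 1))

/-- The product `s_{l₁} s_{l₂} ⋯ s_{l_k}` of the word `l = [l₁, …, l_k]`. -/
def wordProd (n : ℕ) (l : List ℕ) : Perm ℤ := (l.map (sgen n)).prod

/-- The Coxeter length of `w ∈ D_n`: the least length of a word in `s_1, …, s_n` whose
product is `w`. -/
noncomputable def DLength (n : ℕ) (w : Perm ℤ) : ℕ :=
  sInf {k | ∃ l : List ℕ, (∀ i ∈ l, 1 ≤ i ∧ i ≤ n) ∧ l.length = k ∧ wordProd n l = w}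

/-- `dem` is the Demazure product of the Coxeter group `D_n`: the (unique) associative
product on `D_n`, with identity `id`, such that for each simple generator `s` and `u ∈ D_n`,
`s ⋆ u = s·u` if `ℓ(s·u) > ℓ(u)`, and `s ⋆ u = u` if `ℓ(s·u) < ℓ(u)`. -/
def IsDemazure (n : ℕ) (dem : Perm ℤ → Perm ℤ → Perm ℤ) : Prop :=
  (∀ u v, IsEvenSignedPerm n u → IsEvenSignedPerm n v → IsEvenSignedPerm n (dem u v)) ∧
  (∀ u v w, IsEvenSignedPerm n u → IsEvenSignedPerm n v → IsEvenSignedPerm n w →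
      dem (dem u v) w = dem u (dem v w)) ∧
  (∀ u, IsEvenSignedPerm n u → dem 1 u = u ∧ dem u 1 = u) ∧
  (∀ i, 1 ≤ i → i ≤ n → ∀ u, IsEvenSignedPerm n u →
      (DLength n u < DLength n (sgen n i * u) → dem (sgen n i) u = sgen n i * u) ∧
      (DLength n (sgen n i * u) < DLength n u → dem (sgen n i) u = u))

/-- The swap performed in one step of the hopping procedure: exchange the values `t ↔ q`
and simultaneously `-t ↔ -q` (unless `t = -q`). -/
def hswap (t q : ℤ) : Perm ℤ :=
  if t = -q then Equiv.swap t q else Equiv.swap t q * Equiv.swap (-t) (-q)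

/-- `q` is eligible for hopping `t` in `w`: `q ∈ ±[n]`, `q > t` in the order on `±[n]`,
and `q` occurs strictly to the right of `t` in the unfolding of `w`. -/
def HopStep (n : ℕ) (w : Perm ℤ) (t q : ℤ) : Prop :=
  inPM n q ∧ dlt n t q ∧ dkey n (w⁻¹ t) < dkey n (w⁻¹ q) ∧ dkey n (w⁻¹ q) ≤ 2 * n

instance (n : ℕ) (w : Perm ℤ) (t q : ℤ) : Decidable (HopStep n w t q) :=
  inferInstanceAs (Decidable
    (inPM n q ∧ dlt n t q ∧ dkey n (w⁻¹ t) < dkey n (w⁻¹ q) ∧ dkey n (w⁻¹ q) ≤ 2 * n))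

theorem hop_measure (n : ℕ) (w : Perm ℤ) (t q : ℤ) (h : HopStep n w t q) :
    (2 * (n : ℤ) + 1 - dkey n ((hswap t q * w)⁻¹ t)).toNat
      < (2 * (n : ℤ) + 1 - dkey n (w⁻¹ t)).toNat := by
  obtain ⟨⟨hq0, _⟩, _, hlt, hle⟩ := h
  have key : (hswap t q * w)⁻¹ t = w⁻¹ q := by
    have hs : (hswap t q)⁻¹ t = q := by
      unfold hswap
      split_ifs with he
      · subst he
        simp [Equiv.swap_inv, Equiv.swap_apply_left]
      · have h1 : q ≠ -t := fun hc => he (by omega)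
        have h2 : q ≠ -q := fun hc => hq0 (by omega)
        simp [mul_inv_rev, Equiv.swap_inv, Equiv.Perm.mul_apply, Equiv.swap_apply_left,
          Equiv.swap_apply_of_ne_of_ne h1 h2]
    rw [mul_inv_rev, Equiv.Perm.mul_apply, hs]
  rw [key]
  omega

/-- The hopping operator `h_{t,L}`: repeatedly pick the element `q` of `L`, occurring
latest in `L`, among those greater than `t` occurring strictly to the right of `t` in
the unfolding of `w`; swap the values `t ↔ q` (and `-t ↔ -q`, unless `t = -q`); stop
when no such `q` exists. -/
def hop (n : ℕ) (t : ℤ) (L : List ℤ) (w : Perm ℤ) : Perm ℤ :=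
  match h : L.reverse.find? (fun q => decide (HopStep n w t q)) with
  | none => w
  | some q => hop n t L (hswap t q * w)
termination_by (2 * (n : ℤ) + 1 - dkey n (w⁻¹ t)).toNat
decreasing_by
  have hq := List.find?_some h
  simp only [decide_eq_true_eq] at hq
  exact hop_measure n w t q hq

/-- The unfolding `[w(1), …, w(n), -w(n), …, -w(1)]` of a signed permutation `w`. -/
def unfoldList (n : ℕ) (w : Perm ℤ) : List ℤ :=
  (List.range (2 * n)).map fun p => w (ofKey n ((p : ℤ) + 1))

/-- `w ↖ t`: the ordered list of entries of the unfolding of `w` occurring strictly to the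
left of the value `t` and lying strictly between `t` and `-t` in the order on `±[n]`. -/
def liftD (n : ℕ) (w : Perm ℤ) (t : ℤ) : List ℤ :=
  ((unfoldList n w).take (dkey n (w⁻¹ t) - 1).toNat).filter
    fun a => decide (dlt n t a ∧ dlt n a (-t))

/-- `L ∼ₜ L'` : the hopping operators `h_{t,L}` and `h_{t,L'}` agree on all of `D_n`. -/
def HopEquiv (n : ℕ) (t : ℤ) (L L' : List ℤ) : Prop :=
  ∀ u : Perm ℤ, IsEvenSignedPerm n u → hop n t L u = hop n t L' u

/-- The list `[a, a+1, …, b]` (as integers). -/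
def listUp (a b : ℕ) : List ℤ := (List.range (b + 1 - a)).map fun k => (a : ℤ) + k

/-- The list `[-b, -(b-1), …, -a]` (as integers). -/
def listNegUp (a b : ℕ) : List ℤ := (List.range (b + 1 - a)).map fun k => -(b : ℤ) + k

/-- For `1 ≤ i ≤ n-2` : `Q` is one of the minimal coset representatives
(form 0: `id`; form 1: `s_i ⋯ s_j`; form 2: `s_i ⋯ s_{n-2} s_n s_{n-1} ⋯ s_j`;
form 3: `s_i ⋯ s_{n-2} s_n`). -/
def QForm (n i : ℕ) (Q : Perm ℤ) : Prop :=
  Q = 1 ∨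
  (∃ j, i ≤ j ∧ j ≤ n - 1 ∧ Q = wordProd n (List.range' i (j + 1 - i))) ∨
  (∃ j, i ≤ j ∧ j ≤ n - 1 ∧
    Q = wordProd n (List.range' i (n - 1 - i) ++ [n] ++ (List.range' j (n - j)).reverse)) ∨
  Q = wordProd n (List.range' i (n - 1 - i) ++ [n])

/-- `Q` is one of the four elements `id`, `s_{n-1}`, `s_n s_{n-1}`, `s_n` of
`W_{{s_{n-1}, s_n}}`. -/
def QFormTop (n : ℕ) (Q : Perm ℤ) : Prop :=
  Q = 1 ∨ Q = sgen n (n - 1) ∨ Q = sgen n n * sgen n (n - 1) ∨ Q = sgen n n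

/-- For `1 ≤ i ≤ n-2`: `(Q, L)` is a factor of a parabolic factorization together with
its associated list `L_i`. -/
def QList (n i : ℕ) (Q : Perm ℤ) (L : List ℤ) : Prop :=
  (Q = 1 ∧ L = []) ∨
  (∃ j, i ≤ j ∧ j ≤ n - 1 ∧ Q = wordProd n (List.range' i (j + 1 - i)) ∧
    L = listUp (i + 1) (j + 1)) ∨
  (∃ j, i ≤ j ∧ j ≤ n - 1 ∧
    Q = wordProd n (List.range' i (n - 1 - i) ++ [n] ++ (List.range' j (n - j)).reverse) ∧
    L = listUp (i + 1) n ++ listNegUp (j + 1) n) ∨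
  (Q = wordProd n (List.range' i (n - 1 - i) ++ [n]) ∧
    L = listUp (i + 1) (n - 1) ++ [-(n : ℤ)])

/-- `(Q, L)` is the top factor `Q_{n-1}` of a parabolic factorization together with its
associated list `L_{n-1}`. -/
def QListTop (n : ℕ) (Q : Perm ℤ) (L : List ℤ) : Prop :=
  (Q = 1 ∧ L = []) ∨ (Q = sgen n (n - 1) ∧ L = [(n : ℤ)]) ∨
  (Q = sgen n n * sgen n (n - 1) ∧ L = [(n : ℤ), -(n : ℤ)]) ∨
  (Q = sgen n n ∧ L = [-(n : ℤ)])

/-- The partial product `Q_{n-1} Q_{n-2} ⋯ Q_k` of a parabolic factorization. -/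
def prodQ (n : ℕ) (Q : ℕ → Perm ℤ) (k : ℕ) : Perm ℤ :=
  (((List.range' k (n - k)).reverse).map Q).prod

/-- The letterwise extended Demazure action of the generator `s_i` (for `1 ≤ i ≤ n-1`) on an
arbitrary signed permutation: `s_i ⋆ u = s_i·u` if the value `i` occurs strictly to the left
of the value `i+1` in the unfolding of `u`, and `u` otherwise. -/
def demStep (n i : ℕ) (u : Perm ℤ) : Perm ℤ :=
  if dkey n (u⁻¹ (i : ℤ)) < dkey n (u⁻¹ ((i : ℤ) + 1)) then sgen n i * u else u

/-- The letterwise extended Demazure action of a word: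
`(s_{a₁} ⋯ s_{a_k}) ⋆ u = s_{a₁} ⋆ (s_{a₂} ⋆ (⋯ (s_{a_k} ⋆ u)))`. -/
def demWord (n : ℕ) (l : List ℕ) (u : Perm ℤ) : Perm ℤ := l.foldr (demStep n) u

/-- A member of the symmetric group on `±[n]`, viewed as a permutation of `ℤ`:
it fixes `0` and everything of absolute value `> n`. -/
def IsPermPM (n : ℕ) (w : Perm ℤ) : Prop := ∀ a : ℤ, a = 0 ∨ (n : ℤ) < |a| → w a = a

/-- The simple generators of the symmetric group on `±[n]` (type `A_{2n-1}`):
`agen n k` (for `1 ≤ k ≤ 2n-1`) transposes the order-adjacent elements of `±[n]`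
with keys `k` and `k+1`. -/
def agen (n k : ℕ) : Perm ℤ := Equiv.swap (ofKey n (k : ℤ)) (ofKey n ((k : ℤ) + 1))

/-- The Coxeter length of an element of the symmetric group on `±[n]`. -/
noncomputable def ALength (n : ℕ) (w : Perm ℤ) : ℕ :=
  sInf {k | ∃ l : List ℕ, (∀ i ∈ l, 1 ≤ i ∧ i ≤ 2 * n - 1) ∧ l.length = k ∧
    (l.map (agen n)).prod = w}

/-- `dem` is the Demazure product of the symmetric group on `±[n]`, viewed as a Coxeter
group of type `A_{2n-1}` with simple generators the transpositions of order-adjacent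
elements of `±[n]`. -/
def IsDemazureA (n : ℕ) (dem : Perm ℤ → Perm ℤ → Perm ℤ) : Prop :=
  (∀ u v, IsPermPM n u → IsPermPM n v → IsPermPM n (dem u v)) ∧
  (∀ u v w, IsPermPM n u → IsPermPM n v → IsPermPM n w →
      dem (dem u v) w = dem u (dem v w)) ∧
  (∀ u, IsPermPM n u → dem 1 u = u ∧ dem u 1 = u) ∧
  (∀ k, 1 ≤ k → k ≤ 2 * n - 1 → ∀ u, IsPermPM n u →
      (ALength n u < ALength n (agen n k * u) → dem (agen n k) u = agen n k * u) ∧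
      (ALength n (agen n k * u) < ALength n u → dem (agen n k) u = u))

/-!
Every `v` in the parabolic subgroup generated by `s_{i+1}, …, s_n` is a signed permutation
fixing the values `1, …, i`, i.e. the values not greater than `i`. Left multiplication by `v`
relabels values without moving positions: it fixes the value `i`, preserves `±[n]` and the set
of values greater than `i`, and the value `v q` of `v·w` sits where `q` sits in `w`. Hence `q`
may hop `i` in `w` iff `v q` may hop `i` in `v·w`, the latest such element of `L` corresponds
to the latest such element of `v(L)`, and the swap performed is conjugated:
`hswap i (v q) = v · hswap i q · v⁻¹`. Induction along the hopping procedure concludes.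
-/

lemma Equiv.Perm.apply_mem_iff_of_forall_mem_eq {α : Type*} {v : Perm α} {S : Set α}
    (h : ∀ a ∈ S, v a = a) (q : α) : v q ∈ S ↔ q ∈ S := by
  refine ⟨fun hq => ?_, fun hq => (h q hq).symm ▸ hq⟩
  rwa [← v.injective (h _ hq)]

def signedPermSubgroup (n : ℕ) : Subgroup (Perm ℤ) where
  carrier := {w | IsSignedPerm n w}
  mul_mem' {v w} hv hw := ⟨fun a => by simp only [Perm.mul_apply, hw.1, hv.1],
    fun a ha => by rw [Perm.mul_apply, hw.2 a ha, hv.2 a ha]⟩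
  one_mem' := ⟨fun _ => rfl, fun _ _ => rfl⟩
  inv_mem' {v} hv := ⟨fun a => v.injective (by simp only [Perm.coe_inv, apply_symm_apply, hv.1]),
    fun a ha => by rw [Perm.inv_eq_iff_eq, hv.2 a ha]⟩

section Hop

variable {n : ℕ} {t : ℤ} {v : Perm ℤ}

lemma IsSignedPerm.inPM_apply_iff (hv : IsSignedPerm n v) (q : ℤ) :
    inPM n (v q) ↔ inPM n q := by
  have h0 : v 0 = 0 := by have := hv.1 0; rw [neg_zero] at this; omega
  have hfix : ∀ a ∈ {a : ℤ | a = 0 ∨ (n : ℤ) < |a|}, v a = a := by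
    rintro a (rfl | ha)
    exacts [h0, hv.2 a ha]
  have := Perm.apply_mem_iff_of_forall_mem_eq hfix q
  simp only [Set.mem_ofPred_eq] at this
  simp only [inPM, ne_eq, ← not_lt]
  tauto

lemma hopStep_mul_apply_iff (hv : IsSignedPerm n v) (hfix : ∀ a, ¬ dlt n t a → v a = a)
    (w : Perm ℤ) (q : ℤ) : HopStep n (v * w) t (v q) ↔ HopStep n w t q := by
  have ht : v⁻¹ t = t := by rw [Perm.inv_eq_iff_eq, hfix t (lt_irrefl _)]
  have hdlt : dlt n t (v q) ↔ dlt n t q :=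
    not_iff_not.1 (Perm.apply_mem_iff_of_forall_mem_eq (S := {a | ¬ dlt n t a}) hfix q)
  simp only [HopStep, mul_inv_rev, Perm.mul_apply, ht, Perm.coe_inv, symm_apply_apply,
    hv.inPM_apply_iff, hdlt]

lemma hswap_apply_eq_conj (hneg : ∀ a, v (-a) = -v a) (ht : v t = t) (q : ℤ) :
    hswap t (v q) = v * hswap t q * v⁻¹ := by
  have hiff : t = -v q ↔ t = -q := by
    rw [← hneg, ← v.injective.eq_iff (a := t) (b := -q), ht]
  unfold hswap
  simp only [hiff]
  split_ifs
  · rw [← swap_apply_apply, ht]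
  · rw [show v * (swap t q * swap (-t) (-q)) * v⁻¹
        = (v * swap t q * v⁻¹) * (v * swap (-t) (-q) * v⁻¹) by group,
      ← swap_apply_apply, ← swap_apply_apply]
    simp only [hneg, ht]

lemma find?_hopStep_map (hv : IsSignedPerm n v) (hfix : ∀ a, ¬ dlt n t a → v a = a)
    (L : List ℤ) (w : Perm ℤ) :
    (L.map v).reverse.find? (fun q => decide (HopStep n (v * w) t q))
      = (L.reverse.find? (fun q => decide (HopStep n w t q))).map v := by
  rw [← List.map_reverse, List.find?_map]
  congr 2
  funext q
  simp only [Function.comp_apply, hopStep_mul_apply_iff hv hfix]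

lemma hop_of_find?_eq_none {L : List ℤ} {w : Perm ℤ}
    (h : L.reverse.find? (fun q => decide (HopStep n w t q)) = none) : hop n t L w = w := by
  rw [hop]; split <;> simp_all

lemma hop_of_find?_eq_some {L : List ℤ} {w : Perm ℤ} {q : ℤ}
    (h : L.reverse.find? (fun q => decide (HopStep n w t q)) = some q) :
    hop n t L w = hop n t L (hswap t q * w) := by
  rw [hop]; split <;> simp_all

theorem mul_hop (hv : IsSignedPerm n v) (hfix : ∀ a, ¬ dlt n t a → v a = a)
    (L : List ℤ) (w : Perm ℤ) : v * hop n t L w = hop n t (L.map v) (v * w) := by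
  induction w using hop.induct n t L with
  | case1 w h =>
    rw [hop_of_find?_eq_none h,
      hop_of_find?_eq_none (by rw [find?_hopStep_map hv hfix, h]; rfl)]
  | case2 w q h ih =>
    rw [hop_of_find?_eq_some h, ih,
      hop_of_find?_eq_some (w := v * w) (q := v q) (by rw [find?_hopStep_map hv hfix, h]; rfl),
      hswap_apply_eq_conj hv.1 (hfix t (lt_irrefl _))]
    group

end Hop

section Parabolic

variable {n : ℕ}

lemma swap_mul_swap_neg_mem_signedPermSubgroup {a b : ℤ} (ha : inPM n a) (hb : inPM n b) :
    swap a b * swap (-a) (-b) ∈ signedPermSubgroup n := by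
  obtain ⟨ha0, han⟩ := ha
  obtain ⟨hb0, hbn⟩ := hb
  rw [abs_le] at han hbn
  refine ⟨fun x => ?_, fun x hx => ?_⟩
  · simp only [Perm.mul_apply, swap_apply_def]
    split_ifs <;> omega
  · rw [lt_abs] at hx
    simp only [Perm.mul_apply, swap_apply_def]
    split_ifs <;> omega

lemma sgen_mem_signedPermSubgroup {k : ℕ} (hk : 1 ≤ k) (hkn : k ≤ n) (hn : 2 ≤ n) :
    sgen n k ∈ signedPermSubgroup n := by
  unfold sgen
  split_ifs
  · have := swap_mul_swap_neg_mem_signedPermSubgroup (n := n) (a := n - 1) (b := -n)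
      ⟨by omega, by rw [abs_le]; omega⟩ ⟨by omega, by rw [abs_le]; omega⟩
    rwa [neg_neg, swap_comm (-((n : ℤ) - 1))] at this
  · exact swap_mul_swap_neg_mem_signedPermSubgroup ⟨by omega, by rw [abs_le]; omega⟩
      ⟨by omega, by rw [abs_le]; omega⟩

lemma sgen_apply_of_lt {k : ℕ} {a : ℤ} (ha : 1 ≤ a) (hak : a < k) (han : a + 1 < n) :
    sgen n k a = a := by
  unfold sgen
  split_ifs <;>
  · simp only [Perm.mul_apply, swap_apply_def]
    split_ifs <;> omega

lemma not_dlt_natCast_iff {i : ℕ} {a : ℤ} (hi : 1 ≤ i) (hin : i ≤ n) :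
    ¬ dlt n i a ↔ 1 ≤ a ∧ a ≤ i := by
  unfold dlt dkey
  split_ifs <;> omega

lemma closure_sgen_le {i : ℕ} (hi : 1 ≤ i) (hin : i + 2 ≤ n) :
    Subgroup.closure {x | ∃ k, i + 1 ≤ k ∧ k ≤ n ∧ x = sgen n k}
      ≤ signedPermSubgroup n ⊓ fixingSubgroup (Perm ℤ) {a | ¬ dlt n i a} := by
  rw [Subgroup.closure_le]
  rintro _ ⟨k, hik, hkn, rfl⟩
  refine ⟨sgen_mem_signedPermSubgroup (by omega) hkn (by omega),
    (mem_fixingSubgroup_iff _).2 fun a ha => ?_⟩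
  rw [Set.mem_ofPred_eq, not_dlt_natCast_iff hi (by omega)] at ha
  exact sgen_apply_of_lt ha.1 (by omega) (by omega)

end Parabolic

theorem hop_intertwine_parabolic_general (n : ℕ) (i : ℕ) (hi : 1 ≤ i) (hi' : i ≤ n - 2)
    (v : Perm ℤ)
    (hv : v ∈ Subgroup.closure {x : Perm ℤ | ∃ k, i + 1 ≤ k ∧ k ≤ n ∧ x = sgen n k})
    (L : List ℤ) (w : Perm ℤ) :
    v * hop n (i : ℤ) L w = hop n (i : ℤ) (L.map ⇑v) (v * w) := by
  obtain ⟨hsigned, hfix⟩ := closure_sgen_le hi (by omega) hv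
  exact mul_hop hsigned (fun a ha => (mem_fixingSubgroup_iff _).1 hfix a ha) L w

/-- for `1 ≤ i ≤ n-2` and `v` in the subgroup generated by
`s_{i+1}, …, s_n`, left multiplication by `v` intertwines `h_{i,L}` with `h_{i,v(L)}`:
`v · h_{i,L}(w) = h_{i, v(L)}(v·w)`. -/
theorem hop_intertwine_parabolic (n : ℕ) (hn : 3 ≤ n) (i : ℕ) (hi : 1 ≤ i) (hi' : i ≤ n - 2)
    (v : Perm ℤ)
    (hv : v ∈ Subgroup.closure {x : Perm ℤ | ∃ k, i + 1 ≤ k ∧ k ≤ n ∧ x = sgen n k})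
    (L : List ℤ) (hnd : L.Nodup) (hmem : ∀ a ∈ L, inPM n a)
    (w : Perm ℤ) (hw : IsEvenSignedPerm n w) :
    v * hop n (i : ℤ) L w = hop n (i : ℤ) (L.map ⇑v) (v * w) :=
  hop_intertwine_parabolic_general n i hi hi' v hv L w
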